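/- For any graph G and positive integer m, c(M_m(G)) ≤ ‖G‖, the number of edges of G. Moreover, if G is triangle-free, then c(M_m(G)) ≤ ‖G‖ − e₂(G), where e₂(G) is the maximum number of edges of a bipartite subgraph of G. -/

import Mathlib

variable {V : Type*}

/-- An orientation of a simple graph `G`: each edge gets exactly one direction. -/
structure Orient (G : SimpleGraph V) where
  dir : V → V → Prop
  dir_adj : ∀ u v, dir u v → G.Adj u v
  adj_dir : ∀ u v, G.Adj u v → dir u v ∨ dir v u
  asymm : ∀ u v, dir u v → ¬ dir v u

/-- The relation obtained from `dir` by reversing the single arc `u → v`. -/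
def reverseArc (dir : V → V → Prop) (u v : V) : V → V → Prop :=
  fun a b => (dir a b ∧ ¬(a = u ∧ b = v)) ∨ (a = v ∧ b = u)

/-- A relation is acyclic if there is no directed cycle. -/
def IsAcyclicRel (dir : V → V → Prop) : Prop :=
  ∀ u v, dir u v → ¬ Relation.ReflTransGen dir v u

/-- An arc `u → v` is dependent if its reversal creates a directed cycle. -/
def DependentArc (dir : V → V → Prop) (u v : V) : Prop :=
  dir u v ∧ ¬ IsAcyclicRel (reverseArc dir u v)

/-- A cover graph admits an acyclic orientation with no dependent arcs. -/
def IsCoverGraph (G : SimpleGraph V) : Prop :=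
  ∃ D : Orient G, IsAcyclicRel D.dir ∧ ∀ u v, ¬ DependentArc D.dir u v

/-- The number of dependent arcs of an orientation. -/
noncomputable def numDependent {G : SimpleGraph V} (D : Orient G) : ℕ :=
  Set.ncard {p : V × V | DependentArc D.dir p.1 p.2}

/-- `d_min`: minimum number of dependent arcs over all acyclic orientations. -/
noncomputable def dmin (G : SimpleGraph V) : ℕ :=
  sInf {n | ∃ D : Orient G, IsAcyclicRel D.dir ∧ numDependent D = n}

/-- `d_max`: maximum number of dependent arcs over all acyclic orientations. -/
noncomputable def dmax (G : SimpleGraph V) : ℕ :=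
  sSup {n | ∃ D : Orient G, IsAcyclicRel D.dir ∧ numDependent D = n}

/-- `c(G)`: minimum number of edges to delete from `G` to get a cover graph. -/
noncomputable def coverDeletion (G : SimpleGraph V) : ℕ :=
  sInf {n | ∃ F : Set (Sym2 V), F ⊆ G.edgeSet ∧ IsCoverGraph (G.deleteEdges F) ∧ F.ncard = n}

/-- The generalized Mycielski graph `M_m(G)`; `none` is the apex `u`,
`some (i, a)` is the vertex `⟨i, a⟩`. -/
def genMycielski (G : SimpleGraph V) (m : ℕ) : SimpleGraph (Option (Fin (m + 1) × V)) where
  Adj x y :=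
    match x, y with
    | some (i, a), some (j, b) =>
        G.Adj a b ∧ ((i = j ∧ (i : ℕ) = 0) ∨ (i : ℕ) + 1 = (j : ℕ) ∨ (j : ℕ) + 1 = (i : ℕ))
    | some (i, _), none => (i : ℕ) = m
    | none, some (j, _) => (j : ℕ) = m
    | none, none => False
  symm := by
    constructor
    rintro (_ | ⟨i, a⟩) (_ | ⟨j, b⟩) h
    · exact h
    · exact h
    · exact h
    · refine ⟨h.1.symm, ?_⟩
      rcases h.2 with ⟨h1, h2⟩ | h' | h'
      · exact Or.inl ⟨h1.symm, h1 ▸ h2⟩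
      · exact Or.inr (Or.inr h')
      · exact Or.inr (Or.inl h')
  loopless := by
    constructor
    rintro (_ | ⟨i, a⟩) h <;> simp_all

/-- `e₂(G)`: the maximum number of edges of a bipartite subgraph of `G`. -/
noncomputable def e2 (G : SimpleGraph V) : ℕ :=
  sSup {n | ∃ H : SimpleGraph V, H ≤ G ∧ H.Colorable 2 ∧ H.edgeSet.ncard = n}

/-!
Delete the level-`0` copies of the edges of `G` outside a bipartite subgraph `H` (empty in
general, maximum when `G` is triangle-free). If no triangle of `G` contains an edge of `H`, what
remains of `M_m(G)` is triangle-free, and it is `3`-colourable: colour level `0` by a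
`2`-colouring of `H`, the levels `i ≥ 1` by the parity of `i`, and the apex by the third colour.
Such a graph is a cover graph: orienting each edge towards the larger colour, an arc could only
be bypassed by a path running through all three colours, which would close a triangle.
-/

open Relation SimpleGraph

section Acyclic

variable {α : Type*} {R : α → α → Prop}

theorem Relation.TransGen.lt_of_forall_lt {β : Type*} [Preorder β] (f : α → β)
    (hf : ∀ a b, R a b → f a < f b) {a b : α} (h : TransGen R a b) : f a < f b := by
  induction h with
  | single hab => exact hf _ _ hab
  | tail _ hbc ih => exact ih.trans (hf _ _ hbc)

theorem IsAcyclicRel.of_forall_lt {β : Type*} [Preorder β] (f : α → β)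
    (hf : ∀ a b, R a b → f a < f b) : IsAcyclicRel R :=
  fun _ _ huv hvu => lt_irrefl _ ((TransGen.head' huv hvu).lt_of_forall_lt f hf)

theorem IsAcyclicRel.reverseArc {u v : α} (hR : IsAcyclicRel R) (huv : R u v)
    (hdetour : ∀ w, R u w → ¬ TransGen R w v) : IsAcyclicRel (reverseArc R u v) := by
  set R' := _root_.reverseArc R u v
  have hne : u ≠ v := by rintro rfl; exact hR u u huv .refl
  have no_return : ¬ ReflTransGen R' u v := by
    suffices ∀ b, ReflTransGen R' u b → b = u ∨ ¬ ReflTransGen R b v from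
      fun h => (this v h).elim hne.symm (· .refl)
    intro b hb
    induction hb with
    | refl => exact .inl rfl
    | tail _ hbc ih =>
      rcases hbc with ⟨hbc, hbc_ne⟩ | ⟨-, rfl⟩
      · refine .inr fun hcv => ?_
        rcases ih with rfl | hb
        · rcases reflTransGen_iff_eq_or_transGen.mp hcv with rfl | hcv
          · exact hbc_ne ⟨rfl, rfl⟩
          · exact hdetour _ hbc hcv
        · exact hb (.head hbc hcv)
      · exact .inl rfl
  have split : ∀ a b, ReflTransGen R' a b →
      ReflTransGen R a b ∨ (ReflTransGen R' a v ∧ ReflTransGen R' u b) := by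
    intro a b hab
    induction hab with
    | refl => exact .inl .refl
    | tail hab' hbc ih =>
      rcases ih with ih | ⟨hav, hub⟩
      · rcases hbc with ⟨hbc, -⟩ | ⟨rfl, rfl⟩
        · exact .inl (ih.tail hbc)
        · exact .inr ⟨hab', .refl⟩
      · exact .inr ⟨hav, hub.tail hbc⟩
  intro x y hxy hyx
  rcases hxy with ⟨hxy, hxy_ne⟩ | ⟨rfl, rfl⟩
  · rcases split _ _ hyx with hyx | ⟨hyv, hux⟩
    · exact hR x y hxy hyx
    · exact no_return (hux.trans (.head (.inl ⟨hxy, hxy_ne⟩) hyv))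
  · exact no_return hyx

end Acyclic

namespace SimpleGraph

variable {G H : SimpleGraph V}

theorem colorable_two_bot : (⊥ : SimpleGraph V).Colorable 2 :=
  (colorable_one_iff.mpr rfl).mono one_le_two

theorem CliqueFree.commonNeighbors_eq_empty (hG : G.CliqueFree 3) {a b : V} (hab : G.Adj a b) :
    G.commonNeighbors a b = ∅ :=
  Set.eq_empty_of_forall_notMem fun _ hd => by
    classical exact hG _ (is3Clique_triple_iff.mpr ⟨hab, hd.1, hd.2⟩)

theorem isCoverGraph_of_cliqueFree_of_colorable (h3 : G.CliqueFree 3) (hc : G.Colorable 3) :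
    IsCoverGraph G := by
  classical
  obtain ⟨C⟩ := hc
  let D : Orient G :=
    { dir := fun a b => G.Adj a b ∧ C a < C b
      dir_adj := fun _ _ h => h.1
      adj_dir := fun _ _ h => (C.valid h).lt_or_gt.imp (⟨h, ·⟩) (⟨h.symm, ·⟩)
      asymm := fun _ _ h h' => h.2.not_gt h'.2 }
  have hD : ∀ a b, D.dir a b → C a < C b := fun _ _ h => h.2
  have hacyc : IsAcyclicRel D.dir := .of_forall_lt C hD
  refine ⟨D, hacyc, fun u v ⟨huv, hdep⟩ => hdep (hacyc.reverseArc huv fun w huw hwv => ?_)⟩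
  obtain ⟨z, hwz, hzv⟩ := TransGen.head'_iff.mp hwv
  rcases reflTransGen_iff_eq_or_transGen.mp hzv with rfl | hzv
  · exact h3 {u, w, v} (is3Clique_triple_iff.mpr ⟨huw.1, huv.1, hwz.1⟩)
  · -- a path `u → w → z → ⋯ → v` would need four distinct colours
    have := hzv.lt_of_forall_lt C hD
    have := hD _ _ huw
    have := hD _ _ hwz
    omega

end SimpleGraph

section Mycielski

variable {G H : SimpleGraph V} {m : ℕ}

def levelZeroEdges (K : SimpleGraph V) (m : ℕ) : Set (Sym2 (Option (Fin (m + 1) × V))) :=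
  Sym2.map (fun a => some (0, a)) '' K.edgeSet

theorem ncard_levelZeroEdges (K : SimpleGraph V) (m : ℕ) :
    (levelZeroEdges K m).ncard = K.edgeSet.ncard :=
  Set.ncard_image_of_injective _ (Sym2.map.injective fun _ _ h => by simpa using h)

theorem levelZeroEdges_subset_edgeSet {K : SimpleGraph V} (hK : K ≤ G) :
    levelZeroEdges K m ⊆ (genMycielski G m).edgeSet := by
  rintro _ ⟨e, he, rfl⟩
  induction e using Sym2.ind with
  | h a b => exact ⟨hK he, .inl ⟨rfl, rfl⟩⟩

def mycielskiLevel : Option (Fin (m + 1) × V) → ℕ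
  | none => m + 1
  | some (i, _) => i

theorem genMycielski_adj_level {x y : Option (Fin (m + 1) × V)} (h : (genMycielski G m).Adj x y) :
    (mycielskiLevel x = 0 ∧ mycielskiLevel y = 0) ∨ mycielskiLevel x + 1 = mycielskiLevel y ∨
      mycielskiLevel y + 1 = mycielskiLevel x := by
  rcases x with _ | ⟨i, a⟩ <;> rcases y with _ | ⟨j, b⟩
  · exact h.elim
  · exact .inr (.inr (congrArg (· + 1) h.symm))
  · exact .inr (.inl (congrArg (· + 1) h))
  · rcases h.2 with ⟨rfl, h0⟩ | h | h
    · exact .inl ⟨h0, h0⟩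
    · exact .inr (.inl h)
    · exact .inr (.inr h)

theorem adj_of_deleteEdges_levelZeroEdges {i j : Fin (m + 1)} {a b : V}
    (h : ((genMycielski G m).deleteEdges (levelZeroEdges (G \ H) m)).Adj (some (i, a))
      (some (j, b))) (hi : (i : ℕ) = 0) (hj : (j : ℕ) = 0) : H.Adj a b := by
  obtain rfl : i = 0 := Fin.ext hi
  obtain rfl : j = 0 := Fin.ext hj
  rw [deleteEdges_adj] at h
  by_contra hab
  exact h.2 ⟨s(a, b), ⟨h.1.1, hab⟩, rfl⟩

theorem cliqueFree_three_deleteEdges_levelZeroEdges (hm : 0 < m)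
    (hH : ∀ ⦃a b⦄, H.Adj a b → G.commonNeighbors a b = ∅) :
    ((genMycielski G m).deleteEdges (levelZeroEdges (G \ H) m)).CliqueFree 3 := by
  set M' := (genMycielski G m).deleteEdges (levelZeroEdges (G \ H) m)
  -- adjacent vertices lie on consecutive levels unless both are on level `0`, so every triangle
  -- has an edge on level `0`, that is, an edge of `H`
  have base : ∀ x y z, M'.Adj x y → M'.Adj x z → M'.Adj y z →
      mycielskiLevel x = 0 → mycielskiLevel y = 0 → False := by
    rintro (_ | ⟨i, a⟩) (_ | ⟨j, b⟩) z hxy hxz hyz hx hy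
    all_goals simp only [mycielskiLevel, Nat.add_one_ne_zero] at hx hy
    have hab := adj_of_deleteEdges_levelZeroEdges hxy hx hy
    rcases z with _ | ⟨k, d⟩
    · have : (i : ℕ) = m := hxz.1
      omega
    · exact (hH hab).subset ⟨hxz.1.1, hyz.1.1⟩
  classical
  intro s hs
  obtain ⟨x, y, z, hxy, hxz, hyz, -⟩ := is3Clique_iff.mp hs
  have := genMycielski_adj_level hxy.1
  have := genMycielski_adj_level hxz.1
  have := genMycielski_adj_level hyz.1
  have : (mycielskiLevel x = 0 ∧ mycielskiLevel y = 0) ∨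
      (mycielskiLevel x = 0 ∧ mycielskiLevel z = 0) ∨
      (mycielskiLevel y = 0 ∧ mycielskiLevel z = 0) := by omega
  rcases this with ⟨hx, hy⟩ | ⟨hx, hz⟩ | ⟨hy, hz⟩
  · exact base x y z hxy hxz hyz hx hy
  · exact base x z y hxz hxy hyz.symm hx hz
  · exact base y z x hyz hxy.symm hxz.symm hy hz

def mycielskiColor (c : V → Fin 2) : Option (Fin (m + 1) × V) → Fin 3
  | none => 1
  | some (i, a) => if (i : ℕ) = 0 then (c a).castSucc else if Even (i : ℕ) then 0 else 2

theorem mycielskiColor_ne_of_succ_eq (c : V → Fin 2) {i j : Fin (m + 1)} (a b : V)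
    (hij : (i : ℕ) + 1 = j) :
    mycielskiColor c (some (i, a)) ≠ mycielskiColor c (some (j, b)) := by
  have hj : (j : ℕ) ≠ 0 := by omega
  by_cases hi : (i : ℕ) = 0
  · have : ¬ Even (j : ℕ) := by rw [← hij, hi]; decide
    simp only [mycielskiColor, hi, hj, this, if_true, if_false]
    exact (Fin.castSucc_lt_last _).ne
  · have : Even (j : ℕ) ↔ ¬ Even (i : ℕ) := by rw [← hij, Nat.even_add_one]
    simp only [mycielskiColor, hi, hj, if_false, this]
    split_ifs <;> decide

theorem colorable_three_deleteEdges_levelZeroEdges (hm : 0 < m) (hH : H.Colorable 2) :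
    ((genMycielski G m).deleteEdges (levelZeroEdges (G \ H) m)).Colorable 3 := by
  obtain ⟨c⟩ := hH
  refine ⟨Coloring.mk (mycielskiColor c) ?_⟩
  rintro (_ | ⟨i, a⟩) (_ | ⟨j, b⟩) h
  · exact h.1.elim
  · have hj : (j : ℕ) ≠ 0 := by have : (j : ℕ) = m := h.1; omega
    simp only [mycielskiColor, hj, if_false]
    split_ifs <;> decide
  · have hi : (i : ℕ) ≠ 0 := by have : (i : ℕ) = m := h.1; omega
    simp only [mycielskiColor, hi, if_false]
    split_ifs <;> decide
  · rcases h.1.2 with ⟨rfl, hi⟩ | hij | hij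
    · have hab := c.valid (adj_of_deleteEdges_levelZeroEdges h hi hi)
      simp only [mycielskiColor, hi, if_true]
      exact Fin.castSucc_injective _ |>.ne hab
    · exact mycielskiColor_ne_of_succ_eq c a b hij
    · exact (mycielskiColor_ne_of_succ_eq c b a hij).symm

theorem coverDeletion_genMycielski_le_ncard_sdiff (hm : 0 < m) (hH2 : H.Colorable 2)
    (hH : ∀ ⦃a b⦄, H.Adj a b → G.commonNeighbors a b = ∅) :
    coverDeletion (genMycielski G m) ≤ (G \ H).edgeSet.ncard := by
  have hcover : IsCoverGraph ((genMycielski G m).deleteEdges (levelZeroEdges (G \ H) m)) :=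
    isCoverGraph_of_cliqueFree_of_colorable (cliqueFree_three_deleteEdges_levelZeroEdges hm hH)
      (colorable_three_deleteEdges_levelZeroEdges hm hH2)
  rw [← ncard_levelZeroEdges _ m]
  exact Nat.sInf_le ⟨_, levelZeroEdges_subset_edgeSet sdiff_le, hcover, rfl⟩

end Mycielski

theorem exists_colorable_two_ncard_edgeSet_eq_e2 [Finite V] (G : SimpleGraph V) :
    ∃ H ≤ G, H.Colorable 2 ∧ H.edgeSet.ncard = e2 G :=
  Nat.sSup_mem (s := {n | ∃ H ≤ G, H.Colorable 2 ∧ H.edgeSet.ncard = n})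
    ⟨0, ⊥, bot_le, colorable_two_bot, by simp⟩
    ⟨G.edgeSet.ncard, fun _ ⟨_, hHG, _, hH⟩ =>
      hH ▸ Set.ncard_le_ncard (edgeSet_mono hHG) (Set.toFinite _)⟩

theorem coverDeletion_genMycielski_le [Fintype V] (G : SimpleGraph V)
    (m : ℕ) (hm : 0 < m) :
    coverDeletion (genMycielski G m) ≤ G.edgeSet.ncard ∧
      (G.CliqueFree 3 →
        coverDeletion (genMycielski G m) ≤ G.edgeSet.ncard - e2 G) := by
  refine ⟨?_, fun hG => ?_⟩
  · simpa using coverDeletion_genMycielski_le_ncard_sdiff (H := ⊥) hm colorable_two_bot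
      fun _ _ h => h.elim
  · obtain ⟨H, hHG, hH2, hcard⟩ := exists_colorable_two_ncard_edgeSet_eq_e2 G
    calc coverDeletion (genMycielski G m) ≤ (G \ H).edgeSet.ncard :=
          coverDeletion_genMycielski_le_ncard_sdiff hm hH2
            fun _ _ hab => hG.commonNeighbors_eq_empty (hHG hab)
      _ = G.edgeSet.ncard - e2 G := by
          rw [edgeSet_sdiff, Set.ncard_sdiff (edgeSet_mono hHG), hcard]
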